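/- arXiv:math/0611383 — 5 statements merged into one kernel-verified Lean document; each statement's English description precedes it below -/
import Mathlib

section
/- Let p be a prime and ℓ ≥ 1. The number of conjugacy classes of the group GL₂(ℤ/p^ℓℤ) equals p^{2ℓ} − p^{ℓ−1}. -/
open Matrix Finset

namespace Stmt0Aux



variable (p ℓ : ℕ)

def Aset (j : ℕ) : Finset ℕ := if j = 0 then {0} else (range (p^j)).filter (fun a => ¬ p ∣ a)
def Dset (j : ℕ) : Finset ℕ := if j = 0 then (range (p^ℓ)).filter (fun d => ¬ p ∣ d) else range (p^(ℓ-j))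

def F : Finset (ℕ×ℕ×ℕ×ℕ) :=
  (range (ℓ+1)).biUnion fun j => {j} ×ˢ (Aset p j) ×ˢ (range (p^(ℓ-j))) ×ˢ (Dset p ℓ j)

lemma mem_F {s : ℕ×ℕ×ℕ×ℕ} :
    s ∈ F p ℓ ↔ s.1 ≤ ℓ ∧ s.2.1 ∈ Aset p s.1 ∧ s.2.2.1 < p^(ℓ-s.1) ∧ s.2.2.2 ∈ Dset p ℓ s.1 := by
  obtain ⟨j, a, t, d⟩ := s
  simp only [F, mem_biUnion, mem_range, Finset.mem_product, Finset.mem_singleton]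
  constructor
  · rintro ⟨j', hj', rfl, h⟩
    exact ⟨by omega, h.1, by simpa using h.2.1, h.2.2⟩
  · rintro ⟨hj, h1, h2, h3⟩
    exact ⟨j, by omega, rfl, h1, by simpa using h2, h3⟩

lemma card_filter_not_dvd (hp : p.Prime) (m : ℕ) (hm : 1 ≤ m) :
    ((range (p^m)).filter (fun a => ¬ p ∣ a)).card = p^m - p^(m-1) := by
  have hmul : ((range (p^m)).filter (fun a => p ∣ a)).card = p^(m-1) := by
    have himg : ((range (p^(m-1))).image (fun i => p * i)) = (range (p^m)).filter (fun a => p ∣ a) := by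
      ext x
      simp only [Finset.mem_image, mem_range, mem_filter]
      constructor
      · rintro ⟨i, hi, rfl⟩
        refine ⟨?_, ⟨i, rfl⟩⟩
        calc p * i < p * p^(m-1) := by
              exact (Nat.mul_lt_mul_left hp.pos).mpr hi
          _ = p^m := by
              rw [← pow_succ']
              congr 1; omega
      · rintro ⟨hx, i, rfl⟩
        refine ⟨i, ?_, rfl⟩
        by_contra h
        push_neg at h
        have : p^m ≤ p * i := by
          calc p^m = p * p^(m-1) := by rw [← pow_succ']; congr 1; omega
            _ ≤ p * i := Nat.mul_le_mul_left p h
        omega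
    rw [← himg, Finset.card_image_of_injective _ (fun a b h => Nat.eq_of_mul_eq_mul_left hp.pos h)]
    simp
  have := Finset.card_filter_add_card_filter_not (s := range (p^m)) (p := fun a => p ∣ a)
  simp only [Finset.card_range] at this
  omega

lemma card_F (hp : p.Prime) (hℓ : 1 ≤ ℓ) : (F p ℓ).card = p ^ (2 * ℓ) - p ^ (ℓ - 1) := by
  have hdisj : ∀ x ∈ range (ℓ+1), ∀ y ∈ range (ℓ+1), x ≠ y →
      Disjoint ({x} ×ˢ (Aset p x) ×ˢ (range (p^(ℓ-x))) ×ˢ (Dset p ℓ x))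
               ({y} ×ˢ (Aset p y) ×ˢ (range (p^(ℓ-y))) ×ˢ (Dset p ℓ y)) := by
    intro x _ y _ hxy
    rw [Finset.disjoint_left]
    rintro ⟨j, a, t, d⟩ h1 h2
    simp only [Finset.mem_product, Finset.mem_singleton] at h1 h2
    exact hxy (h1.1 ▸ h2.1 ▸ rfl)
  rw [F, Finset.card_biUnion hdisj]
  have hterm : ∀ j ∈ range (ℓ+1),
      ({j} ×ˢ (Aset p j) ×ˢ (range (p^(ℓ-j))) ×ˢ (Dset p ℓ j)).card
        = p^(2*ℓ-j) - p^(2*ℓ-j-1) := by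
    intro j hj
    rw [mem_range] at hj
    have hj' : j ≤ ℓ := by omega
    simp only [Finset.card_product, Finset.card_singleton, Finset.card_range, one_mul]
    rcases Nat.eq_zero_or_pos j with rfl | hjpos
    · rw [Aset, Dset]
      rw [if_pos rfl, if_pos rfl]
      rw [card_filter_not_dvd p hp ℓ hℓ]
      simp only [Finset.card_singleton, Nat.sub_zero, one_mul]
      rw [Nat.mul_sub, ← pow_add, ← pow_add]
      congr 2 <;> omega
    · rw [Aset, Dset]
      rw [if_neg (by omega), if_neg (by omega)]
      rw [card_filter_not_dvd p hp j hjpos, Finset.card_range]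
      rw [Nat.sub_mul, ← pow_add, ← pow_add, ← pow_add]
      congr 2 <;> omega
  rw [Finset.sum_congr rfl hterm]
  -- telescoping
  have key : ∀ n, n ≤ ℓ → ∑ j ∈ range (n+1), (p^(2*ℓ-j) - p^(2*ℓ-j-1)) = p^(2*ℓ) - p^(2*ℓ-n-1) := by
    intro n
    induction n with
    | zero => intro _; simp
    | succ n ih =>
      intro hn
      rw [Finset.sum_range_succ, ih (by omega)]
      have h1 : p^(2*ℓ-(n+1)-1) ≤ p^(2*ℓ-(n+1)) := Nat.pow_le_pow_right hp.pos (by omega)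
      have h2 : p^(2*ℓ-(n+1)) = p^(2*ℓ-n-1) := by rw [show 2*ℓ-(n+1) = 2*ℓ-n-1 by omega]
      have h3 : p^(2*ℓ-n-1) ≤ p^(2*ℓ) := Nat.pow_le_pow_right hp.pos (by omega)
      omega
  rw [key ℓ le_rfl]
  congr 2
  omega



variable {p ℓ : ℕ}

lemma neZero_pow (hp : p.Prime) (m : ℕ) : NeZero (p^m) := ⟨pow_ne_zero _ hp.pos.ne'⟩

/-- unit iff not divisible by p (val version) -/
lemma isUnit_iff_val (hp : p.Prime) (hℓ : 1 ≤ ℓ) (x : ZMod (p^ℓ)) :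
    IsUnit x ↔ ¬ p ∣ x.val := by
  haveI := neZero_pow hp ℓ
  conv_lhs => rw [← ZMod.natCast_zmod_val x]
  rw [ZMod.isUnit_iff_coprime, Nat.coprime_pow_right_iff (by omega : 0 < ℓ) _ _,
    Nat.coprime_comm, Nat.Prime.coprime_iff_not_dvd hp]

lemma isUnit_natCast_iff (hp : p.Prime) (hℓ : 1 ≤ ℓ) (a : ℕ) :
    IsUnit (a : ZMod (p^ℓ)) ↔ ¬ p ∣ a := by
  rw [ZMod.isUnit_iff_coprime, Nat.coprime_pow_right_iff (by omega : 0 < ℓ) _ _,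
    Nat.coprime_comm, Nat.Prime.coprime_iff_not_dvd hp]

def phi (p ℓ : ℕ) (hℓ : 1 ≤ ℓ) : ZMod (p^ℓ) →+* ZMod p :=
  ZMod.castHom (dvd_pow_self p (by omega : ℓ ≠ 0)) (ZMod p)

/-- unit iff nonzero mod p -/
lemma isUnit_iff_mod_p (hp : p.Prime) (hℓ : 1 ≤ ℓ) (x : ZMod (p^ℓ)) :
    IsUnit x ↔ phi p ℓ hℓ x ≠ 0 := by
  rw [phi]
  haveI := neZero_pow hp ℓ
  rw [isUnit_iff_val hp hℓ]
  rw [ZMod.castHom_apply, ← ZMod.natCast_val, Ne, ZMod.natCast_eq_zero_iff]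

/-- x divisible by p iff zero mod p -/
lemma dvd_iff_mod_p (hp : p.Prime) (hℓ : 1 ≤ ℓ) (x : ZMod (p^ℓ)) :
    (∃ y, x = (p : ZMod (p^ℓ)) * y) ↔ phi p ℓ hℓ x = 0 := by
  rw [phi]
  haveI := neZero_pow hp ℓ
  constructor
  · rintro ⟨y, rfl⟩
    rw [_root_.map_mul, map_natCast, ZMod.natCast_self, zero_mul]
  · intro h
    rw [ZMod.castHom_apply, ← ZMod.natCast_val, ZMod.natCast_eq_zero_iff] at h
    obtain ⟨y, hy⟩ := h
    refine ⟨(y : ZMod (p^ℓ)), ?_⟩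
    conv_lhs => rw [← ZMod.natCast_zmod_val x]
    rw [hy]
    push_cast
    ring

/-- p^j = 0 in ZMod (p^ℓ) iff ℓ ≤ j -/
lemma pow_p_eq_zero_iff (hp : p.Prime) (j : ℕ) :
    ((p : ZMod (p^ℓ))^j = 0) ↔ ℓ ≤ j := by
  rw [← Nat.cast_pow, ZMod.natCast_eq_zero_iff,
    Nat.pow_dvd_pow_iff_le_right hp.one_lt]

/-- division lemma: p^j * x = p^j * y implies x ≡ y mod p^(ℓ-j) -/
lemma cancel_pow_p (hp : p.Prime) {j : ℕ} (hj : j ≤ ℓ) {x y : ZMod (p^ℓ)}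
    (h : (p : ZMod (p^ℓ))^j * x = (p : ZMod (p^ℓ))^j * y) :
    ZMod.castHom (pow_dvd_pow p (Nat.sub_le ℓ j) : p^(ℓ-j) ∣ p^ℓ) (ZMod (p^(ℓ-j))) x
      = ZMod.castHom (pow_dvd_pow p (Nat.sub_le ℓ j) : p^(ℓ-j) ∣ p^ℓ) (ZMod (p^(ℓ-j))) y := by
  haveI := neZero_pow hp ℓ
  have hz : (p : ZMod (p^ℓ))^j * (x - y) = 0 := by rw [mul_sub, h, sub_self]
  rw [← sub_eq_zero, ← map_sub]
  set z := x - y with hzdef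
  have h1 : ((p^j * z.val : ℕ) : ZMod (p^ℓ)) = 0 := by
    push_cast
    rw [ZMod.natCast_zmod_val]
    exact hz
  rw [ZMod.natCast_eq_zero_iff] at h1
  have h2 : p^(ℓ-j) ∣ z.val := by
    have hℓeq : p^ℓ = p^j * p^(ℓ-j) := by rw [← pow_add]; congr 1; omega
    obtain ⟨k, hk⟩ := h1
    have hk2 : p ^ j * z.val = p ^ j * (p ^ (ℓ - j) * k) := by
      rw [hk, ← mul_assoc, ← pow_add, show j + (ℓ - j) = ℓ from by omega]
    exact ⟨k, Nat.eq_of_mul_eq_mul_left (pow_pos hp.pos j) hk2⟩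
  rw [ZMod.castHom_apply, ← ZMod.natCast_val, ZMod.natCast_eq_zero_iff]
  exact h2

/-- p^j * x = p^j * (x.val % p^(ℓ-j)) -/
lemma pow_p_mul_mod (hp : p.Prime) {j : ℕ} (hj : j ≤ ℓ) (x : ZMod (p^ℓ)) :
    (p : ZMod (p^ℓ))^j * x = (p : ZMod (p^ℓ))^j * ((x.val % p^(ℓ-j) : ℕ) : ZMod (p^ℓ)) := by
  haveI := neZero_pow hp ℓ
  have hx : x = ((x.val % p^(ℓ-j) : ℕ) : ZMod (p^ℓ))
      + (p : ZMod (p^ℓ))^(ℓ-j) * ((x.val / p^(ℓ-j) : ℕ) : ZMod (p^ℓ)) := by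
    conv_lhs => rw [← ZMod.natCast_zmod_val x, ← Nat.mod_add_div x.val (p^(ℓ-j))]
    push_cast
    ring
  have h0 : (p : ZMod (p^ℓ))^ℓ = 0 := (pow_p_eq_zero_iff hp ℓ).mpr le_rfl
  conv_lhs => rw [hx]
  rw [mul_add, ← mul_assoc, ← pow_add, show j + (ℓ - j) = ℓ by omega, h0, zero_mul, add_zero]

/-- castHom of natCast equality gives nat equality below the modulus -/
lemma natCast_inj_of_lt (hp : p.Prime) {m a b : ℕ} (ha : a < p^m) (hb : b < p^m)
    (h : (a : ZMod (p^m)) = (b : ZMod (p^m))) : a = b := by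
  haveI := neZero_pow hp m
  have := congrArg ZMod.val h
  rwa [ZMod.val_cast_of_lt ha, ZMod.val_cast_of_lt hb] at this




lemma key_id {R : Type*} [CommRing R] (a b c d x y : R) :
    !![a,b;c,d] * !![x, a*x+b*y; y, c*x+d*y]
      = !![x, a*x+b*y; y, c*x+d*y] * !![0, -(a*d-b*c); 1, a+d] := by
  ext i j
  fin_cases i <;> fin_cases j <;>
    simp [Matrix.mul_apply, Fin.sum_univ_succ] <;> ring

variable {p ℓ : ℕ}

/-- cyclic normal form -/
lemma normal_form_cyclic (hp : p.Prime) (hℓ : 1 ≤ ℓ)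
    (B : Matrix (Fin 2) (Fin 2) (ZMod (p^ℓ)))
    (hns : ¬ ∃ s : ZMod p, B.map (phi p ℓ hℓ) = s • (1 : Matrix (Fin 2) (Fin 2) (ZMod p))) :
    ∃ u : (Matrix (Fin 2) (Fin 2) (ZMod (p^ℓ)))ˣ,
      u⁻¹.val * B * u.val = !![0, -B.det; 1, B.trace] := by
  haveI : Fact p.Prime := ⟨hp⟩
  set a := B 0 0 with ha
  set b := B 0 1 with hb
  set c := B 1 0 with hc
  set d := B 1 1 with hd
  have hB : B = !![a,b;c,d] := by rw [ha, hb, hc, hd]; exact Matrix.eta_fin_two B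
  have main : ∀ x y : ZMod (p^ℓ), IsUnit (!![x, a*x+b*y; y, c*x+d*y]).det →
      ∃ u : (Matrix (Fin 2) (Fin 2) (ZMod (p^ℓ)))ˣ,
        u⁻¹.val * B * u.val = !![0, -B.det; 1, B.trace] := by
    intro x y hdet
    set P := !![x, a*x+b*y; y, c*x+d*y] with hP
    have hPu : IsUnit P := (Matrix.isUnit_iff_isUnit_det P).mpr hdet
    refine ⟨hPu.unit, ?_⟩
    have hcoe : (hPu.unit : Matrix (Fin 2) (Fin 2) (ZMod (p^ℓ))) = P := hPu.unit_spec
    have hkey : B * P = P * !![0, -B.det; 1, B.trace] := by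
      rw [hB, hP, Matrix.det_fin_two_of, Matrix.trace_fin_two_of]
      exact key_id a b c d x y
    calc hPu.unit⁻¹.val * B * hPu.unit.val = hPu.unit⁻¹.val * (B * P) := by rw [mul_assoc, hcoe]
      _ = hPu.unit⁻¹.val * (hPu.unit.val * !![0, -B.det; 1, B.trace]) := by rw [hkey, hcoe]
      _ = !![0, -B.det; 1, B.trace] := by rw [← mul_assoc, Units.inv_mul, one_mul]
  set φ := phi p ℓ hℓ with hφ
  by_cases h1 : φ c = 0
  · by_cases h2 : φ b = 0
    · -- a - d is a unit
      have h3 : φ a ≠ φ d := by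
        intro h
        exact hns ⟨φ a, by
          rw [hB]
          ext i j
          fin_cases i <;> fin_cases j <;>
            simp [Matrix.one_apply, h1, h2, h] ⟩
      apply main 1 1
      rw [Matrix.det_fin_two_of]
      have e : (1 : ZMod (p^ℓ)) * (c * 1 + d * 1) - (a * 1 + b * 1) * 1 = (c + d) - (a + b) := by
        ring
      rw [e, isUnit_iff_mod_p hp hℓ]
      rw [map_sub, map_add, map_add, h1, h2]
      intro hcon
      apply h3
      rw [zero_add, add_zero, sub_eq_zero] at hcon
      exact hcon.symm
    · -- b unit: v = e1 = (0,1)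
      apply main 0 1
      rw [Matrix.det_fin_two_of]
      have e : (0 : ZMod (p^ℓ)) * (c * 0 + d * 1) - (a * 0 + b * 1) * 1 = -b := by ring
      rw [e, isUnit_iff_mod_p hp hℓ, map_neg]
      simpa using h2
  · -- c unit: v = e0 = (1,0)
    apply main 1 0
    rw [Matrix.det_fin_two_of]
    have e : (1 : ZMod (p^ℓ)) * (c * 1 + d * 0) - (a * 1 + b * 0) * 0 = c := by ring
    rw [e, isUnit_iff_mod_p hp hℓ]
    exact h1


lemma scalar_extract (hp : p.Prime) (hℓ : 1 ≤ ℓ)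
    (B : Matrix (Fin 2) (Fin 2) (ZMod (p^ℓ)))
    (h : ∃ s : ZMod p, B.map (phi p ℓ hℓ) = s • (1 : Matrix (Fin 2) (Fin 2) (ZMod p))) :
    ∃ (b : ℕ) (B' : Matrix (Fin 2) (Fin 2) (ZMod (p^ℓ))),
      B = (b : ZMod (p^ℓ)) • 1 + (p : ZMod (p^ℓ)) • B' := by
  haveI : Fact p.Prime := ⟨hp⟩
  obtain ⟨s, hs⟩ := h
  have key : ∀ i j, ∃ y, B i j - (s.val : ZMod (p^ℓ)) * ((1 : Matrix (Fin 2) (Fin 2) (ZMod (p^ℓ))) i j)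
      = (p : ZMod (p^ℓ)) * y := by
    intro i j
    rw [dvd_iff_mod_p hp hℓ, map_sub, _root_.map_mul]
    have hBij : phi p ℓ hℓ (B i j) = s * ((1 : Matrix (Fin 2) (Fin 2) (ZMod p)) i j) := by
      have := congrFun (congrFun hs i) j
      simpa [Matrix.map_apply] using this
    have hsv : phi p ℓ hℓ ((s.val : ZMod (p^ℓ))) = s := by
      rw [map_natCast, ZMod.natCast_zmod_val]
    have hone : phi p ℓ hℓ ((1 : Matrix (Fin 2) (Fin 2) (ZMod (p^ℓ))) i j)
        = (1 : Matrix (Fin 2) (Fin 2) (ZMod p)) i j := by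
      by_cases hij : i = j <;> simp [Matrix.one_apply, hij]
    rw [hBij, hsv, hone, sub_self]
  refine ⟨s.val, Matrix.of (fun i j => Classical.choose (key i j)), ?_⟩
  ext i j
  have := Classical.choose_spec (key i j)
  simp only [Matrix.add_apply, Matrix.smul_apply, Matrix.of_apply, smul_eq_mul]
  linear_combination this

def Mrep (p ℓ : ℕ) (j a t d : ℕ) : Matrix (Fin 2) (Fin 2) (ZMod (p^ℓ)) :=
  (a : ZMod (p^ℓ)) • 1
    + ((p : ZMod (p^ℓ))^j) • !![0, -(d : ZMod (p^ℓ)); 1, (t : ZMod (p^ℓ))]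

lemma Mrep_eq (j a t d : ℕ) : Mrep p ℓ j a t d
    = !![(a : ZMod (p^ℓ)), -((p : ZMod (p^ℓ))^j * d);
         (p : ZMod (p^ℓ))^j, (a : ZMod (p^ℓ)) + (p : ZMod (p^ℓ))^j * t] := by
  ext i k
  fin_cases i <;> fin_cases k <;>
    simp [Mrep, Matrix.one_apply] <;> ring

lemma conj_helper {R : Type*} [CommRing R] (u : (Matrix (Fin 2) (Fin 2) R)ˣ)
    (x y : R) (B : Matrix (Fin 2) (Fin 2) R) :
    u⁻¹.val * (x • 1 + y • B) * u.val = x • 1 + y • (u⁻¹.val * B * u.val) := by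
  rw [mul_add, add_mul, Matrix.mul_smul, Matrix.mul_smul, Matrix.smul_mul, Matrix.smul_mul,
    mul_one, Units.inv_mul]

/-- full normal form -/
lemma normal_form (hp : p.Prime) (hℓ : 1 ≤ ℓ) (A : Matrix (Fin 2) (Fin 2) (ZMod (p^ℓ))) :
    ∃ (j a t d : ℕ) (u : (Matrix (Fin 2) (Fin 2) (ZMod (p^ℓ)))ˣ),
      j ≤ ℓ ∧ a < p^j ∧ t < p^(ℓ-j) ∧ d < p^(ℓ-j) ∧
      u⁻¹.val * A * u.val = Mrep p ℓ j a t d := by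
  classical
  haveI := neZero_pow hp ℓ
  haveI : Fact p.Prime := ⟨hp⟩
  set P : ℕ → Prop := fun k => ∃ (x : ZMod (p^ℓ)) (B : Matrix (Fin 2) (Fin 2) (ZMod (p^ℓ))),
    A = x • 1 + ((p : ZMod (p^ℓ))^k) • B with hPdef
  have hP0 : P 0 := ⟨0, A, by simp⟩
  set j := Nat.findGreatest P ℓ with hjdef
  have hj : j ≤ ℓ := Nat.findGreatest_le ℓ
  have hPj : P j := Nat.findGreatest_spec (Nat.zero_le ℓ) hP0
  obtain ⟨x, B, hAB⟩ := hPj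
  by_cases hjl : j = ℓ
  · refine ⟨ℓ, x.val, 0, 0, 1, le_rfl, ZMod.val_lt x, by simp, by simp, ?_⟩
    have hp0 : ((p : ZMod (p^ℓ))^ℓ) = 0 := (pow_p_eq_zero_iff hp ℓ).mpr le_rfl
    rw [Mrep]
    simp only [inv_one, Units.val_one, one_mul, mul_one, hp0, zero_smul, add_zero, Nat.cast_zero]
    rw [hAB, hjl, hp0, zero_smul, add_zero, ZMod.natCast_zmod_val]
  · have hjlt : j < ℓ := by omega
    have hns : ¬ ∃ s : ZMod p, B.map (phi p ℓ hℓ) = s • (1 : Matrix (Fin 2) (Fin 2) (ZMod p)) := by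
      intro hsc
      obtain ⟨b, B', hB'⟩ := scalar_extract hp hℓ B hsc
      have : P (j+1) := by
        refine ⟨x + (p : ZMod (p^ℓ))^j * b, B', ?_⟩
        rw [hAB, hB']
        rw [smul_add, smul_smul, smul_smul, pow_succ, add_smul, add_assoc]
      have hng : ¬ P (j+1) := Nat.findGreatest_is_greatest (Nat.lt_succ_self j) (by omega)
      exact hng this
    obtain ⟨u₁, hu₁⟩ := normal_form_cyclic hp hℓ B hns
    set B₂ : Matrix (Fin 2) (Fin 2) (ZMod (p^ℓ)) :=
      ((x.val / p^j : ℕ) : ZMod (p^ℓ)) • 1 + !![0, -B.det; 1, B.trace] with hB₂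
    have hns₂ : ¬ ∃ s : ZMod p, B₂.map (phi p ℓ hℓ) = s • (1 : Matrix (Fin 2) (Fin 2) (ZMod p)) := by
      rintro ⟨s, hs⟩
      have := congrFun (congrFun hs 1) 0
      simp [hB₂, Matrix.map_apply, Matrix.one_apply] at this
    obtain ⟨u₂, hu₂⟩ := normal_form_cyclic hp hℓ B₂ hns₂
    set a := x.val % p^j with hadef
    set t := B₂.trace.val % p^(ℓ-j) with htdef
    set d := B₂.det.val % p^(ℓ-j) with hddef
    refine ⟨j, a, t, d, u₁ * u₂, hj, Nat.mod_lt _ (pow_pos hp.pos j),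
      Nat.mod_lt _ (pow_pos hp.pos (ℓ-j)), Nat.mod_lt _ (pow_pos hp.pos (ℓ-j)), ?_⟩
    have hxsplit : x = (a : ZMod (p^ℓ)) + (p : ZMod (p^ℓ))^j * ((x.val / p^j : ℕ) : ZMod (p^ℓ)) := by
      conv_lhs => rw [← ZMod.natCast_zmod_val x, ← Nat.mod_add_div x.val (p^j)]
      push_cast
      ring
    have step1 : u₁⁻¹.val * A * u₁.val
        = (a : ZMod (p^ℓ)) • 1 + ((p : ZMod (p^ℓ))^j) • B₂ := by
      rw [hAB, conj_helper, hu₁, hB₂]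
      rw [smul_add, smul_smul]
      conv_lhs => rw [hxsplit]
      rw [add_smul, add_assoc]
    have step2 : (u₁ * u₂)⁻¹.val * A * (u₁ * u₂).val
        = (a : ZMod (p^ℓ)) • 1 + ((p : ZMod (p^ℓ))^j) • !![0, -B₂.det; 1, B₂.trace] := by
      rw [_root_.mul_inv_rev, Units.val_mul, Units.val_mul]
      calc u₂⁻¹.val * u₁⁻¹.val * A * (u₁.val * u₂.val)
          = u₂⁻¹.val * (u₁⁻¹.val * A * u₁.val) * u₂.val := by
            simp only [mul_assoc]
        _ = u₂⁻¹.val * ((a : ZMod (p^ℓ)) • 1 + ((p : ZMod (p^ℓ))^j) • B₂) * u₂.val := by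
            rw [step1]
        _ = (a : ZMod (p^ℓ)) • 1 + ((p : ZMod (p^ℓ))^j) • (u₂⁻¹.val * B₂ * u₂.val) := by
            rw [conj_helper]
        _ = _ := by rw [hu₂]
    rw [step2, Mrep]
    congr 1
    have h1 := pow_p_mul_mod hp hj B₂.trace
    rw [← htdef] at h1
    have h2 := pow_p_mul_mod hp hj B₂.det
    rw [← hddef] at h2
    ext i k
    fin_cases i <;> fin_cases k <;> simp [h1, h2]

lemma cancel_pow_p_nat (hp : p.Prime) {k : ℕ} (hk : k ≤ ℓ) {a b : ℕ}
    (ha : a < p^(ℓ-k)) (hb : b < p^(ℓ-k))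
    (h : (p : ZMod (p^ℓ))^k * a = (p : ZMod (p^ℓ))^k * b) : a = b := by
  have h2 := cancel_pow_p hp hk h
  rw [map_natCast, map_natCast] at h2
  exact natCast_inj_of_lt hp ha hb h2

lemma isUnit_Mrep (hp : p.Prime) (hℓ : 1 ≤ ℓ) {j a t d : ℕ}
    (hcond : (j = 0 ∧ a = 0 ∧ ¬ p ∣ d) ∨ (1 ≤ j ∧ ¬ p ∣ a)) :
    IsUnit (Mrep p ℓ j a t d) := by
  haveI : Fact p.Prime := ⟨hp⟩
  rw [Matrix.isUnit_iff_isUnit_det, Mrep_eq, Matrix.det_fin_two_of]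
  rcases hcond with ⟨rfl, rfl, hd⟩ | ⟨hj, ha⟩
  · have e : ((0:ℕ) : ZMod (p^ℓ)) * (((0:ℕ) : ZMod (p^ℓ)) + (p : ZMod (p^ℓ))^0 * t)
        - (-((p : ZMod (p^ℓ))^0 * d)) * (p : ZMod (p^ℓ))^0 = (d : ZMod (p^ℓ)) := by
      push_cast
      ring
    rw [e, isUnit_natCast_iff hp hℓ]
    exact hd
  · rw [isUnit_iff_mod_p hp hℓ]
    have hφp : phi p ℓ hℓ ((p : ZMod (p^ℓ))^j) = 0 := by
      rw [map_pow, map_natCast, ZMod.natCast_self, zero_pow (by omega : j ≠ 0)]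
    have ha' : ((a : ZMod p)) ≠ 0 := by
      rw [Ne, ZMod.natCast_eq_zero_iff]
      exact ha
    have e : phi p ℓ hℓ ((a : ZMod (p^ℓ)) * ((a : ZMod (p^ℓ)) + (p : ZMod (p^ℓ))^j * t)
        - (-((p : ZMod (p^ℓ))^j * d)) * (p : ZMod (p^ℓ))^j) = (a : ZMod p) * (a : ZMod p) := by
      simp only [map_sub, _root_.map_mul, map_add, map_neg, hφp, map_natCast]
      ring
    rw [e]
    exact mul_ne_zero ha' ha'

lemma conj_flip {R : Type*} [CommRing R] (u : (Matrix (Fin 2) (Fin 2) R)ˣ)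
    {X Y : Matrix (Fin 2) (Fin 2) R} (h : u⁻¹.val * X * u.val = Y) :
    (u⁻¹)⁻¹.val * Y * (u⁻¹).val = X := by
  rw [inv_inv, ← h]
  simp only [← mul_assoc]
  rw [Units.mul_inv, one_mul, mul_assoc, Units.mul_inv, mul_one]

lemma inj_j (hp : p.Prime) (hℓ : 1 ≤ ℓ) {j j' a a' t t' d d' : ℕ}
    (hj' : j' ≤ ℓ) (hlt : j < j')
    (u : (Matrix (Fin 2) (Fin 2) (ZMod (p^ℓ)))ˣ)
    (h : u⁻¹.val * Mrep p ℓ j' a' t' d' * u.val = Mrep p ℓ j a t d) : False := by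
  haveI : Fact p.Prime := ⟨hp⟩
  have h2 : Mrep p ℓ j a t d = (a' : ZMod (p^ℓ)) • 1
      + ((p : ZMod (p^ℓ))^j') • (u⁻¹.val * !![0, -(d' : ZMod (p^ℓ)); 1, (t' : ZMod (p^ℓ))] * u.val) := by
    rw [← conj_helper, ← Mrep, h]
  have h3 := congrFun (congrFun h2 1) 0
  rw [Mrep_eq] at h3
  simp only [Matrix.add_apply, Matrix.smul_apply, Matrix.one_apply, smul_eq_mul] at h3
  simp at h3
  obtain ⟨w, he⟩ : ∃ w, (p : ZMod (p^ℓ))^j = (p : ZMod (p^ℓ))^j' * w := ⟨_, h3⟩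
  have hkey : (p : ZMod (p^ℓ))^j * (1 - (p : ZMod (p^ℓ)) * ((p : ZMod (p^ℓ))^(j'-j-1) * w)) = 0 := by
    have hexp : (p : ZMod (p^ℓ))^j * ((p : ZMod (p^ℓ)) * (p : ZMod (p^ℓ))^(j'-j-1))
        = (p : ZMod (p^ℓ))^j' := by
      rw [← pow_succ', ← pow_add]
      congr 1
      omega
    calc (p : ZMod (p^ℓ))^j * (1 - (p : ZMod (p^ℓ)) * ((p : ZMod (p^ℓ))^(j'-j-1) * w))
        = (p : ZMod (p^ℓ))^j - ((p : ZMod (p^ℓ))^j * ((p : ZMod (p^ℓ)) * (p : ZMod (p^ℓ))^(j'-j-1))) * w := by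
          ring
      _ = (p : ZMod (p^ℓ))^j - (p : ZMod (p^ℓ))^j' * w := by rw [hexp]
      _ = 0 := by rw [← he, sub_self]
  have hu1 : IsUnit (1 - (p : ZMod (p^ℓ)) * ((p : ZMod (p^ℓ))^(j'-j-1) * w)) := by
    rw [isUnit_iff_mod_p hp hℓ, map_sub, _root_.map_one, _root_.map_mul, map_natCast,
      ZMod.natCast_self, zero_mul, sub_zero]
    exact one_ne_zero
  have hz : (p : ZMod (p^ℓ))^j = 0 := by
    rcases hu1 with ⟨v, hv⟩
    have := congrArg (fun z => z * (v⁻¹ : (ZMod (p^ℓ))ˣ).val) hkey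
    simpa [← hv, mul_assoc] using this
  rw [pow_p_eq_zero_iff hp] at hz
  omega

lemma inj_same (hp : p.Prime) (hℓ : 1 ≤ ℓ) {j a a' t t' d d' : ℕ} (hj : j ≤ ℓ)
    (ha : a < p^j) (ha' : a' < p^j) (ht : t < p^(ℓ-j)) (ht' : t' < p^(ℓ-j))
    (hd : d < p^(ℓ-j)) (hd' : d' < p^(ℓ-j))
    (u : (Matrix (Fin 2) (Fin 2) (ZMod (p^ℓ)))ˣ)
    (h : u⁻¹.val * Mrep p ℓ j a t d * u.val = Mrep p ℓ j a' t' d') :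
    a = a' ∧ t = t' ∧ d = d' := by
  haveI : Fact p.Prime := ⟨hp⟩
  haveI := neZero_pow hp ℓ
  set C : Matrix (Fin 2) (Fin 2) (ZMod (p^ℓ)) := !![0, -(d : ZMod (p^ℓ)); 1, (t : ZMod (p^ℓ))] with hC
  set C' : Matrix (Fin 2) (Fin 2) (ZMod (p^ℓ)) := !![0, -(d' : ZMod (p^ℓ)); 1, (t' : ZMod (p^ℓ))] with hC'
  set X := u⁻¹.val * C * u.val with hX
  have h2 : (a : ZMod (p^ℓ)) • (1 : Matrix (Fin 2) (Fin 2) (ZMod (p^ℓ))) + ((p : ZMod (p^ℓ))^j) • X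
      = (a' : ZMod (p^ℓ)) • 1 + ((p : ZMod (p^ℓ))^j) • C' := by
    rw [hX, ← conj_helper, ← Mrep, h, Mrep]
  -- a = a'
  have hent := congrFun (congrFun h2 0) 0
  simp only [Matrix.add_apply, Matrix.smul_apply, Matrix.one_apply, smul_eq_mul, hC'] at hent
  simp at hent
  -- hent : a + p^j * X 0 0 = a'
  have haa : a = a' := by
    have hmul : (p : ZMod (p^ℓ))^(ℓ-j) * (a : ZMod (p^ℓ)) = (p : ZMod (p^ℓ))^(ℓ-j) * (a' : ZMod (p^ℓ)) := by
      have hz : (p : ZMod (p^ℓ))^(ℓ-j) * (p : ZMod (p^ℓ))^j = 0 := by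
        rw [← pow_add]
        rw [pow_p_eq_zero_iff hp]
        omega
      calc (p : ZMod (p^ℓ))^(ℓ-j) * (a : ZMod (p^ℓ))
          = (p : ZMod (p^ℓ))^(ℓ-j) * ((a : ZMod (p^ℓ)) + (p : ZMod (p^ℓ))^j * X 0 0)
            - ((p : ZMod (p^ℓ))^(ℓ-j) * (p : ZMod (p^ℓ))^j) * X 0 0 := by ring
        _ = (p : ZMod (p^ℓ))^(ℓ-j) * (a' : ZMod (p^ℓ)) := by rw [hent, hz, zero_mul, sub_zero]
    exact cancel_pow_p_nat hp (Nat.sub_le ℓ j)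
      (by rw [show ℓ-(ℓ-j) = j from by omega]; exact ha)
      (by rw [show ℓ-(ℓ-j) = j from by omega]; exact ha') hmul
  subst haa
  have h3 : ((p : ZMod (p^ℓ))^j) • X = ((p : ZMod (p^ℓ))^j) • C' := add_left_cancel h2
  -- map to ZMod (p^(ℓ-j))
  set π := ZMod.castHom (pow_dvd_pow p (Nat.sub_le ℓ j) : p^(ℓ-j) ∣ p^ℓ) (ZMod (p^(ℓ-j))) with hπ
  have hmap : X.map π = C'.map π := by
    ext i k
    simp only [Matrix.map_apply]
    apply cancel_pow_p hp hj
    have := congrFun (congrFun h3 i) k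
    simpa [Matrix.smul_apply, smul_eq_mul] using this
  have hUV : (u.val.map π) * (u⁻¹.val.map π) = 1 := by
    rw [← Matrix.map_mul, Units.mul_inv, Matrix.map_one π (map_zero π) (map_one π)]
  have hVU : (u⁻¹.val.map π) * (u.val.map π) = 1 := by
    rw [← Matrix.map_mul, Units.inv_mul, Matrix.map_one π (map_zero π) (map_one π)]
  have hXmap : X.map π = (u⁻¹.val.map π) * (C.map π) * (u.val.map π) := by
    rw [hX, Matrix.map_mul, Matrix.map_mul]
  -- trace
  have htr : (C.map π).trace = (C'.map π).trace := by
    rw [← hmap, hXmap, Matrix.trace_mul_cycle, hUV, one_mul]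
  have hdet : (C.map π).det = (C'.map π).det := by
    rw [← hmap, hXmap, Matrix.det_mul, Matrix.det_mul, mul_comm, ← mul_assoc, ← Matrix.det_mul, hUV]
    simp
  have htrc : ∀ (t₀ d₀ : ℕ), ((!![0, -(d₀ : ZMod (p^ℓ)); 1, (t₀ : ZMod (p^ℓ))]).map π).trace
      = (t₀ : ZMod (p^(ℓ-j))) := by
    intro t₀ d₀
    rw [Matrix.trace_fin_two]
    simp [Matrix.map_apply]
  have hdetc : ∀ (t₀ d₀ : ℕ), ((!![0, -(d₀ : ZMod (p^ℓ)); 1, (t₀ : ZMod (p^ℓ))]).map π).det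
      = (d₀ : ZMod (p^(ℓ-j))) := by
    intro t₀ d₀
    rw [Matrix.det_fin_two]
    simp [Matrix.map_apply]
  rw [hC, hC', htrc t d, htrc t' d'] at htr
  rw [hC, hC', hdetc t d, hdetc t' d'] at hdet
  exact ⟨rfl, natCast_inj_of_lt hp ht ht' htr, natCast_inj_of_lt hp hd hd' hdet⟩

lemma cond_of_isUnit (hp : p.Prime) (hℓ : 1 ≤ ℓ) {j a t d : ℕ} (ha : a < p^j)
    (hU : IsUnit (Mrep p ℓ j a t d)) : (j = 0 → ¬ p ∣ d) ∧ (1 ≤ j → ¬ p ∣ a) := by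
  haveI : Fact p.Prime := ⟨hp⟩
  have hdet : IsUnit (Mrep p ℓ j a t d).det := (Matrix.isUnit_iff_isUnit_det _).mp hU
  rw [Mrep_eq, Matrix.det_fin_two_of, isUnit_iff_mod_p hp hℓ] at hdet
  constructor
  · rintro rfl
    have ha0 : a = 0 := by simpa using ha
    subst ha0
    intro hpd
    apply hdet
    have e : ((0:ℕ) : ZMod (p^ℓ)) * (((0:ℕ) : ZMod (p^ℓ)) + (p : ZMod (p^ℓ))^0 * t)
        - (-((p : ZMod (p^ℓ))^0 * d)) * (p : ZMod (p^ℓ))^0 = ((d:ℕ) : ZMod (p^ℓ)) := by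
      push_cast
      ring
    rw [e, map_natCast, ZMod.natCast_eq_zero_iff]
    exact hpd
  · intro hj1 hpa
    apply hdet
    have hφp : phi p ℓ hℓ ((p : ZMod (p^ℓ))^j) = 0 := by
      rw [map_pow, map_natCast, ZMod.natCast_self, zero_pow (by omega : j ≠ 0)]
    have e : phi p ℓ hℓ ((a : ZMod (p^ℓ)) * ((a : ZMod (p^ℓ)) + (p : ZMod (p^ℓ))^j * t)
        - (-((p : ZMod (p^ℓ))^j * d)) * (p : ZMod (p^ℓ))^j) = (a : ZMod p) * (a : ZMod p) := by
      simp only [map_sub, _root_.map_mul, map_add, map_neg, hφp, map_natCast]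
      ring
    rw [e, show ((a:ℕ) : ZMod p) = 0 from (ZMod.natCast_eq_zero_iff a p).mpr hpa, mul_zero]

lemma bounds_of_mem_F (hp : p.Prime) {s : ℕ×ℕ×ℕ×ℕ} (hs : s ∈ F p ℓ) :
    s.1 ≤ ℓ ∧ s.2.1 < p^s.1 ∧ s.2.2.1 < p^(ℓ-s.1) ∧ s.2.2.2 < p^(ℓ-s.1) := by
  rw [mem_F] at hs
  obtain ⟨hj, hA, ht, hD⟩ := hs
  refine ⟨hj, ?_, ht, ?_⟩
  · rw [Aset] at hA
    split_ifs at hA with h0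
    · have := Finset.mem_singleton.mp hA
      rw [this]
      exact pow_pos hp.pos _
    · exact Finset.mem_range.mp (Finset.mem_filter.mp hA).1
  · rw [Dset] at hD
    split_ifs at hD with h0
    · have := Finset.mem_range.mp (Finset.mem_filter.mp hD).1
      rw [h0]
      simpa using this
    · exact Finset.mem_range.mp hD

end Stmt0Aux

/-- The number of conjugacy classes of `GL₂(ℤ/p^ℓℤ)` equals `p^(2ℓ) − p^(ℓ−1)`. -/
theorem stmt_0 (p ℓ : ℕ) (hp : p.Prime) (hℓ : 1 ≤ ℓ) :
    Nat.card (ConjClasses (GL (Fin 2) (ZMod (p ^ ℓ)))) = p ^ (2 * ℓ) - p ^ (ℓ - 1) := by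
  classical
  haveI : Fact p.Prime := ⟨hp⟩
  haveI := Stmt0Aux.neZero_pow hp ℓ
  have hunit : ∀ s : ℕ×ℕ×ℕ×ℕ, s ∈ Stmt0Aux.F p ℓ →
      IsUnit (Stmt0Aux.Mrep p ℓ s.1 s.2.1 s.2.2.1 s.2.2.2) := by
    intro s hs
    rw [Stmt0Aux.mem_F] at hs
    obtain ⟨hj, hA, ht, hD⟩ := hs
    apply Stmt0Aux.isUnit_Mrep hp hℓ
    rcases Nat.eq_zero_or_pos s.1 with h0 | h1
    · left
      refine ⟨h0, ?_, ?_⟩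
      · rw [Stmt0Aux.Aset, if_pos h0] at hA
        simpa using hA
      · rw [Stmt0Aux.Dset, if_pos h0] at hD
        exact (Finset.mem_filter.mp hD).2
    · right
      refine ⟨h1, ?_⟩
      rw [Stmt0Aux.Aset, if_neg (by omega)] at hA
      exact (Finset.mem_filter.mp hA).2
  set Φ : {s : ℕ×ℕ×ℕ×ℕ // s ∈ Stmt0Aux.F p ℓ} → ConjClasses (GL (Fin 2) (ZMod (p ^ ℓ))) :=
    fun s => ConjClasses.mk ((hunit s.1 s.2).unit) with hΦ
  have hbij : Function.Bijective Φ := by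
    constructor
    · rintro ⟨s, hs⟩ ⟨s', hs'⟩ hss
      simp only [hΦ, ConjClasses.mk_eq_mk_iff_isConj] at hss
      rw [isConj_iff] at hss
      obtain ⟨g, hg⟩ := hss
      have hmat : (g⁻¹)⁻¹.val * (Stmt0Aux.Mrep p ℓ s.1 s.2.1 s.2.2.1 s.2.2.2) * (g⁻¹).val
          = Stmt0Aux.Mrep p ℓ s'.1 s'.2.1 s'.2.2.1 s'.2.2.2 := by
        have h1 := congrArg Units.val hg
        simp only [Units.val_mul] at h1
        rw [(hunit s hs).unit_spec, (hunit s' hs').unit_spec] at h1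
        rw [inv_inv]
        exact h1
      obtain ⟨hjs, has, hts, hds⟩ := Stmt0Aux.bounds_of_mem_F hp hs
      obtain ⟨hjs', has', hts', hds'⟩ := Stmt0Aux.bounds_of_mem_F hp hs'
      rcases lt_trichotomy s.1 s'.1 with hlt | heq | hlt
      · exact absurd (Stmt0Aux.conj_flip _ hmat)
          (fun hcf => Stmt0Aux.inj_j hp hℓ hjs' hlt _ hcf)
      · obtain ⟨j, a, t, d⟩ := s
        obtain ⟨j', a', t', d'⟩ := s'
        simp only at heq hmat hjs has hts hds hjs' has' hts' hds'
        subst heq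
        obtain ⟨h1, h2, h3⟩ := Stmt0Aux.inj_same hp hℓ hjs has has' hts hts' hds hds' g⁻¹ hmat
        simp only [Subtype.mk.injEq, Prod.mk.injEq]
        exact ⟨trivial, h1, h2, h3⟩
      · exact absurd hmat (fun hcf => Stmt0Aux.inj_j hp hℓ hjs hlt _ hcf)
    · intro c
      obtain ⟨A, rfl⟩ := ConjClasses.mk_surjective c
      obtain ⟨j, a, t, d, u, hj, ha, ht, hd, hA⟩ := Stmt0Aux.normal_form hp hℓ A.val
      have hMU : IsUnit (Stmt0Aux.Mrep p ℓ j a t d) := by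
        rw [← hA]
        exact ((u⁻¹).isUnit.mul A.isUnit).mul u.isUnit
      have hcond := Stmt0Aux.cond_of_isUnit hp hℓ ha hMU
      have hmem : ((j,a,t,d) : ℕ×ℕ×ℕ×ℕ) ∈ Stmt0Aux.F p ℓ := by
        rw [Stmt0Aux.mem_F]
        refine ⟨hj, ?_, ht, ?_⟩
        · rw [Stmt0Aux.Aset]
          split_ifs with h0
          · subst h0
            simp only [pow_zero] at ha
            interval_cases a
            simp
          · exact Finset.mem_filter.mpr ⟨Finset.mem_range.mpr ha, hcond.2 (by omega)⟩
        · rw [Stmt0Aux.Dset]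
          split_ifs with h0
          · refine Finset.mem_filter.mpr ⟨Finset.mem_range.mpr ?_, hcond.1 h0⟩
            subst h0
            simpa using hd
          · exact Finset.mem_range.mpr hd
      refine ⟨⟨(j,a,t,d), hmem⟩, ?_⟩
      simp only [hΦ]
      rw [ConjClasses.mk_eq_mk_iff_isConj, isConj_iff]
      refine ⟨u, ?_⟩
      apply Units.ext
      rw [Units.val_mul, Units.val_mul, (hunit _ hmem).unit_spec]
      show u.val * (Stmt0Aux.Mrep p ℓ j a t d) * (u⁻¹).val = A.val
      rw [← hA]
      simp only [← mul_assoc]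
      rw [Units.mul_inv, one_mul, mul_assoc, Units.mul_inv, mul_one]
  have hcard := Nat.card_eq_of_bijective Φ hbij
  rw [← hcard, Nat.card_eq_fintype_card, Fintype.card_coe]
  exact Stmt0Aux.card_F p ℓ hp hℓ
end

section
/- Let p be prime, ℓ₁ > ℓ₂ ≥ 1, and let G = Aut(ℤ/p^{ℓ₁}ℤ ⊕ ℤ/p^{ℓ₂}ℤ), realized as matrices (a, b; c, d) with a ∈ (ℤ/p^{ℓ₁}ℤ)^×, b ∈ p^{ℓ₁−ℓ₂}(ℤ/p^{ℓ₁}ℤ), c ∈ ℤ/p^{ℓ₂}ℤ, d ∈ (ℤ/p^{ℓ₂}ℤ)^×. Then the map det : G → (ℤ/p^{ℓ₂}ℤ)^×, (a,b;c,d) ↦ (ad − bc) mod p^{ℓ₂} (where b = p^{ℓ₁−ℓ₂}b' and bc is computed as p^{ℓ₁−ℓ₂}b'c reduced mod p^{ℓ₂}), is a surjective group homomorphism. -/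
/-!
An additive endomorphism `φ` of `ZMod N × ZMod M` is the integer combination
`φ z = z₁ • φ (1, 0) + z₂ • φ (0, 1)`, so composition of endomorphisms is multiplication of
their matrices `(a, b; c, d)`. When `M ∣ N`, reduction `ZMod N → ZMod M` is a ring hom, and the
determinant computed in `ZMod M` is therefore multiplicative; the automorphisms
`(x, y) ↦ (x, u * y)` show that every unit is a determinant.
-/

namespace ZModProd

variable {N M : ℕ}

lemma eq_cast_zsmul_add (z : ZMod N × ZMod M) :
    z = (z.1.cast : ℤ) • ((1 : ZMod N), (0 : ZMod M)) +
      (z.2.cast : ℤ) • ((0 : ZMod N), (1 : ZMod M)) := by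
  ext <;> simp

lemma addMonoidHom_apply_eq_zsmul_add {A : Type*} [AddCommGroup A] (φ : ZMod N × ZMod M →+ A)
    (z : ZMod N × ZMod M) :
    φ z = (z.1.cast : ℤ) • φ (1, 0) + (z.2.cast : ℤ) • φ (0, 1) := by
  conv_lhs => rw [eq_cast_zsmul_add z]
  rw [map_add, map_zsmul, map_zsmul]

/-- `ad - bc` for the matrix with columns `φ (1, 0) = (a, c)` and `φ (0, 1) = (b, d)`,
with `a, b` reduced modulo `M`. -/
def det (h : M ∣ N) (φ : ZMod N × ZMod M →+ ZMod N × ZMod M) : ZMod M :=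
  ZMod.castHom h (ZMod M) (φ (1, 0)).1 * (φ (0, 1)).2 -
    ZMod.castHom h (ZMod M) (φ (0, 1)).1 * (φ (1, 0)).2

variable (h : M ∣ N)

lemma det_id : det h (AddMonoidHom.id _) = 1 := by
  simp only [det, AddMonoidHom.id_apply, map_one, map_zero]
  ring

lemma det_comp (φ ψ : ZMod N × ZMod M →+ ZMod N × ZMod M) :
    det h (φ.comp ψ) = det h φ * det h ψ := by
  have hcast (x : ZMod N) : ((x.cast : ℤ) : ZMod M) = ZMod.castHom h (ZMod M) x :=
    ZMod.intCast_cast x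
  simp only [det, AddMonoidHom.comp_apply, addMonoidHom_apply_eq_zsmul_add φ (ψ _), Prod.fst_add,
    Prod.snd_add, Prod.smul_fst, Prod.smul_snd]
  simp only [zsmul_eq_mul, map_add, map_mul, map_intCast, hcast, ZMod.intCast_zmod_cast]
  ring

def detHom : Multiplicative (AddAut (ZMod N × ZMod M)) →* (ZMod M)ˣ :=
  MonoidHom.toHomUnits
    { toFun := fun φ => det h φ.toAdd.toAddMonoidHom
      map_one' := det_id h
      map_mul' := fun φ ψ => det_comp h φ.toAdd.toAddMonoidHom ψ.toAdd.toAddMonoidHom }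

def diagUnit (u : (ZMod M)ˣ) : AddAut (ZMod N × ZMod M) :=
  (AddEquiv.refl _).prodCongr (AddAut.mulLeft u).toAdd

lemma detHom_diagUnit (u : (ZMod M)ˣ) : detHom h (.ofAdd (diagUnit u)) = u := by
  ext
  change ZMod.castHom h (ZMod M) 1 * (u * 1) - ZMod.castHom h (ZMod M) 0 * (u * 0) = u
  rw [map_one, map_zero]
  ring

lemma detHom_surjective : Function.Surjective (detHom h) :=
  fun u => ⟨_, detHom_diagUnit h u⟩

end ZModProd

theorem stmt_9_general (p ℓ₁ ℓ₂ : ℕ) (h21 : ℓ₂ < ℓ₁) :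
    ∃ D : Multiplicative (AddAut (ZMod (p ^ ℓ₁) × ZMod (p ^ ℓ₂))) →* (ZMod (p ^ ℓ₂))ˣ,
      Function.Surjective D ∧
      ∀ φ : AddAut (ZMod (p ^ ℓ₁) × ZMod (p ^ ℓ₂)),
        (D (Multiplicative.ofAdd φ) : ZMod (p ^ ℓ₂)) =
          ZMod.castHom (pow_dvd_pow p h21.le) (ZMod (p ^ ℓ₂)) (φ (1, 0)).1 * (φ (0, 1)).2 -
          ZMod.castHom (pow_dvd_pow p h21.le) (ZMod (p ^ ℓ₂)) (φ (0, 1)).1 * (φ (1, 0)).2 :=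
  ⟨ZModProd.detHom _, ZModProd.detHom_surjective _, fun _ => rfl⟩

/-- The determinant `(a,b;c,d) ↦ (ad − bc) mod p^ℓ₂` is a surjective group homomorphism
`Aut(ℤ/p^ℓ₁ℤ ⊕ ℤ/p^ℓ₂ℤ) → (ℤ/p^ℓ₂ℤ)ˣ`.  Here, for an automorphism `φ`, the matrix entries
are read off from `φ(1,0) = (a,c)` and `φ(0,1) = (b,d)`, and `ad − bc` is computed after
reducing `a` and `b` modulo `p^ℓ₂`. -/
theorem stmt_9 (p ℓ₁ ℓ₂ : ℕ) (hp : p.Prime) (h21 : ℓ₂ < ℓ₁) (h2 : 1 ≤ ℓ₂) :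
    ∃ D : Multiplicative (AddAut (ZMod (p ^ ℓ₁) × ZMod (p ^ ℓ₂))) →* (ZMod (p ^ ℓ₂))ˣ,
      Function.Surjective D ∧
      ∀ φ : AddAut (ZMod (p ^ ℓ₁) × ZMod (p ^ ℓ₂)),
        (D (Multiplicative.ofAdd φ) : ZMod (p ^ ℓ₂)) =
          ZMod.castHom (pow_dvd_pow p h21.le) (ZMod (p ^ ℓ₂)) (φ (1, 0)).1 * (φ (0, 1)).2 -
          ZMod.castHom (pow_dvd_pow p h21.le) (ZMod (p ^ ℓ₂)) (φ (0, 1)).1 * (φ (1, 0)).2 :=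
  stmt_9_general p ℓ₁ ℓ₂ h21
end

section
/- Let p be prime, ℓ₁ > ℓ₂ ≥ 1, and let M = ℤ/p^{ℓ₁}ℤ ⊕ ℤ/p^{ℓ₂}ℤ with generators f₁, f₂ of the two summands. Suppose m₁ < ℓ₁ and ℓ₂ ≤ m₁, with m₂ ≤ ℓ₂, m₂ ≤ m₁. Let e₁ = p^{ℓ₁−m₁}f₁, e₂ = p^{ℓ₂−m₂}f₂, and let N = ⟨e₁, e₂⟩ ≅ ℤ/p^{m₁}ℤ ⊕ ℤ/p^{m₂}ℤ. Then the isomorphism φ : N → φ(N) determined by φ(e₁) = e₁ + f₂, φ(e₂) = e₂ does not extend to an automorphism of M. -/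
/-- Non-extension: in `M = ℤ/p^ℓ₁ℤ ⊕ ℤ/p^ℓ₂ℤ` with `ℓ₂ ≤ m₁ < ℓ₁`, `m₂ ≤ ℓ₂`, `m₂ ≤ m₁`,
let `e₁ = p^(ℓ₁−m₁)·f₁` and `e₂ = p^(ℓ₂−m₂)·f₂`.  The isomorphism of the submodule
`⟨e₁,e₂⟩` onto its image sending `e₁ ↦ e₁ + f₂`, `e₂ ↦ e₂` does not extend to an
automorphism of `M`. -/
theorem stmt_11 (p ℓ₁ ℓ₂ m₁ m₂ : ℕ) (hp : p.Prime) (h2 : 1 ≤ ℓ₂) (hm1 : ℓ₂ ≤ m₁)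
    (hm1' : m₁ < ℓ₁) (hm2 : m₂ ≤ ℓ₂) (hm21 : m₂ ≤ m₁) :
    ¬ ∃ Φ : AddAut (ZMod (p ^ ℓ₁) × ZMod (p ^ ℓ₂)),
        Φ ((p : ZMod (p ^ ℓ₁)) ^ (ℓ₁ - m₁), 0) =
          ((p : ZMod (p ^ ℓ₁)) ^ (ℓ₁ - m₁), 1) ∧
        Φ (0, (p : ZMod (p ^ ℓ₂)) ^ (ℓ₂ - m₂)) =
          (0, (p : ZMod (p ^ ℓ₂)) ^ (ℓ₂ - m₂)) := by
  haveI : Fact p.Prime := ⟨hp⟩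
  rintro ⟨Φ, h1, -⟩
  -- e₁ is divisible by p
  set y : ZMod (p ^ ℓ₁) × ZMod (p ^ ℓ₂) := ((p : ZMod (p ^ ℓ₁)) ^ (ℓ₁ - m₁ - 1), 0) with hy
  have hk : ℓ₁ - m₁ = (ℓ₁ - m₁ - 1) + 1 := by omega
  have hpy : p • y = ((p : ZMod (p ^ ℓ₁)) ^ (ℓ₁ - m₁), 0) := by
    rw [hy, Prod.smul_mk, smul_zero, nsmul_eq_mul, ← pow_succ', ← hk]
  have himg : p • Φ y = ((p : ZMod (p ^ ℓ₁)) ^ (ℓ₁ - m₁), 1) := by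
    rw [← h1, ← hpy, map_nsmul]
  -- second coordinate: 1 = p * c in ZMod (p^ℓ₂)
  have h2nd : (p : ZMod (p ^ ℓ₂)) * (Φ y).2 = 1 := by
    have := congrArg Prod.snd himg
    simpa [nsmul_eq_mul] using this
  -- cast to ZMod p
  have hdvd : p ∣ p ^ ℓ₂ := dvd_pow_self p (by omega)
  have := congrArg (ZMod.castHom hdvd (ZMod p)) h2nd
  simp only [map_mul, map_one, map_natCast, ZMod.natCast_self, zero_mul] at this
  exact zero_ne_one this
end

section
/- Let p be prime, ℓ ≥ 2, and let G = Aut(ℤ/p^ℓℤ ⊕ ℤ/pℤ). Let Z = {diag(1 + p^{ℓ−1}u, 1) : u ∈ F_p} ⊆ G and H = {(1 + p^{ℓ−1}u, p^{ℓ−1}v; w, 1) : u, v, w ∈ F_p} ⊆ G, which is the kernel of the natural surjection G → (ℤ/p^{ℓ−1}ℤ)^× × F_p^×. Then H is isomorphic to the Heisenberg group over F_p via (1 + p^{ℓ−1}u, p^{ℓ−1}v; w, 1) ↦ (1, v, u; 0, 1, w; 0, 0, 1), and under this isomorphism Z corresponds to the center of the Heisenberg group. -/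
/-- The Heisenberg group over a commutative ring `R`: triples `(u, v, w)` corresponding to
the unitriangular matrix `(1, v, u; 0, 1, w; 0, 0, 1)`. -/
@[ext]
structure Heis (R : Type) where
  u : R
  v : R
  w : R

namespace Heis

variable {R : Type} [CommRing R]

instance : Mul (Heis R) := ⟨fun a b => ⟨a.u + b.u + a.v * b.w, a.v + b.v, a.w + b.w⟩⟩
instance : One (Heis R) := ⟨⟨0, 0, 0⟩⟩
instance : Inv (Heis R) := ⟨fun a => ⟨-a.u + a.v * a.w, -a.v, -a.w⟩⟩

@[simp] lemma mul_u (a b : Heis R) : (a * b).u = a.u + b.u + a.v * b.w := rfl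
@[simp] lemma mul_v (a b : Heis R) : (a * b).v = a.v + b.v := rfl
@[simp] lemma mul_w (a b : Heis R) : (a * b).w = a.w + b.w := rfl
@[simp] lemma one_u : (1 : Heis R).u = 0 := rfl
@[simp] lemma one_v : (1 : Heis R).v = 0 := rfl
@[simp] lemma one_w : (1 : Heis R).w = 0 := rfl
@[simp] lemma inv_u (a : Heis R) : a⁻¹.u = -a.u + a.v * a.w := rfl
@[simp] lemma inv_v (a : Heis R) : a⁻¹.v = -a.v := rfl
@[simp] lemma inv_w (a : Heis R) : a⁻¹.w = -a.w := rfl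

instance : Group (Heis R) where
  mul_assoc a b c := by ext <;> simp <;> ring
  one_mul a := by ext <;> simp
  mul_one a := by ext <;> simp
  inv_mul_cancel a := by ext <;> simp [mul_comm]

end Heis


/-!
Put `P = p^(ℓ-1)` in `ℤ/p^ℓ`. Since `P * p = 0`, the product `P * n` depends only on `n mod p`,
and `c ↦ P * c` identifies `F_p` with the annihilator of `p` in `ℤ/p^ℓ`; since `ℓ ≥ 2`, also
`P * P = 0`. With these rules the matrices `(1 + P u, P v; w, 1)` multiply exactly like the
Heisenberg matrices `(1, v, u; 0, 1, w; 0, 0, 1)`, so they form a faithful linear action of the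
Heisenberg group on `ℤ/p^ℓ ⊕ F_p`. Conversely, an automorphism `φ` in the kernel satisfies
`p * (φ (1, 0)).1 = p` and `p * (φ (0, 1)).1 = 0`, so by the annihilator description
`φ (1, 0) = (1 + P u, w)` and `φ (0, 1) = (P v, 1)`; since `(1, 0)` and `(0, 1)` generate, `φ` is
the image of `(u, v, w)`. The center `{(u, 0, 0)}` goes to the diagonal matrices.
-/

namespace ZMod

variable {p ℓ : ℕ}

theorem pow_pred_mul_natCast_eq_iff (hp : p ≠ 0) (hℓ : ℓ ≠ 0) {m n : ℕ} :
    (p : ZMod (p ^ ℓ)) ^ (ℓ - 1) * m = (p : ZMod (p ^ ℓ)) ^ (ℓ - 1) * n ↔ (m : ZMod p) = n := by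
  have hpow : p ^ ℓ = p ^ (ℓ - 1) * p := by rw [← pow_succ, Nat.sub_add_cancel (by omega)]
  simp only [← Nat.cast_pow, ← Nat.cast_mul, natCast_eq_natCast_iff']
  rw [hpow, Nat.mul_mod_mul_left, Nat.mul_mod_mul_left,
    Nat.mul_left_cancel_iff (Nat.pos_of_ne_zero (pow_ne_zero _ hp))]

theorem pow_pred_mul_val_eq [NeZero p] (hℓ : ℓ ≠ 0) {c : ZMod p} {n : ℕ} (h : c = n) :
    (p : ZMod (p ^ ℓ)) ^ (ℓ - 1) * c.val = (p : ZMod (p ^ ℓ)) ^ (ℓ - 1) * n :=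
  (pow_pred_mul_natCast_eq_iff (NeZero.ne p) hℓ).2 (by rwa [natCast_zmod_val])

theorem pow_pred_mul_natCast_self (hℓ : ℓ ≠ 0) :
    (p : ZMod (p ^ ℓ)) ^ (ℓ - 1) * p = 0 := by
  rw [← pow_succ, Nat.sub_add_cancel (by omega), ← Nat.cast_pow, natCast_self]

theorem pow_pred_mul_pow_pred (hℓ : 2 ≤ ℓ) :
    (p : ZMod (p ^ ℓ)) ^ (ℓ - 1) * (p : ZMod (p ^ ℓ)) ^ (ℓ - 1) = 0 := by
  rw [← pow_add, show ℓ - 1 + (ℓ - 1) = ℓ - 1 + 1 + (ℓ - 2) by omega, pow_add, pow_succ,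
    pow_pred_mul_natCast_self (by omega), zero_mul]

theorem castHom_natCast_pow {n k : ℕ} (h : p ∣ n) (hk : k ≠ 0) :
    castHom h (ZMod p) ((p : ZMod n) ^ k) = 0 := by
  rw [map_pow, map_natCast, natCast_self, zero_pow hk]

theorem castHom_natCast_mul {n : ℕ} (h : p ∣ n) (t : ZMod n) :
    castHom h (ZMod p) (p * t) = 0 := by
  rw [map_mul, map_natCast, natCast_self, zero_mul]

theorem pow_pred_mul_val_injective [NeZero p] (hℓ : ℓ ≠ 0) :
    Function.Injective fun c : ZMod p => (p : ZMod (p ^ ℓ)) ^ (ℓ - 1) * c.val := fun c d h => by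
  simpa [natCast_zmod_val] using (pow_pred_mul_natCast_eq_iff (NeZero.ne p) hℓ).1 h

theorem exists_eq_pow_pred_mul_val [NeZero p] (hℓ : ℓ ≠ 0) {z : ZMod (p ^ ℓ)}
    (hz : (p : ZMod (p ^ ℓ)) * z = 0) : ∃ c : ZMod p, z = (p : ZMod (p ^ ℓ)) ^ (ℓ - 1) * c.val := by
  have : NeZero (p ^ ℓ) := ⟨pow_ne_zero _ (NeZero.ne p)⟩
  have hdvd : p * p ^ (ℓ - 1) ∣ p * z.val := by
    rw [← pow_succ', Nat.sub_add_cancel (by omega), ← natCast_eq_zero_iff, Nat.cast_mul,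
      natCast_zmod_val, hz]
  obtain ⟨n, hn⟩ := Nat.dvd_of_mul_dvd_mul_left (Nat.pos_of_ne_zero (NeZero.ne p)) hdvd
  refine ⟨n, ?_⟩
  rw [pow_pred_mul_val_eq hℓ rfl, ← natCast_zmod_val z, hn]
  push_cast
  rfl

theorem prod_addMonoidHom_ext {m n : ℕ} {A F : Type*} [AddGroup A] [FunLike F (ZMod m × ZMod n) A]
    [AddMonoidHomClass F (ZMod m × ZMod n) A] {f g : F} (h₁ : f (1, 0) = g (1, 0))
    (h₂ : f (0, 1) = g (0, 1)) : f = g := by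
  refine DFunLike.ext f g fun ⟨x, y⟩ => ?_
  have hxy : (x, y) = (cast x : ℤ) • ((1, 0) : ZMod m × ZMod n) + (cast y : ℤ) • (0, 1) := by
    simp
  rw [hxy, map_add, map_add, map_zsmul, map_zsmul, map_zsmul, map_zsmul, h₁, h₂]

end ZMod

namespace Heis

theorem mem_center_iff {R : Type} [CommRing R] {a : Heis R} :
    a ∈ Subgroup.center (Heis R) ↔ a.v = 0 ∧ a.w = 0 := by
  refine ⟨fun ha => ⟨?_, ?_⟩, fun ⟨hv, hw⟩ => Subgroup.mem_center_iff.2 fun b => ?_⟩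
  · simpa using (congrArg Heis.u (Subgroup.mem_center_iff.1 ha ⟨0, 0, 1⟩)).symm
  · simpa using congrArg Heis.u (Subgroup.mem_center_iff.1 ha ⟨0, 1, 0⟩)
  · ext <;> simp [hv, hw, add_comm]

variable {p ℓ : ℕ}

/-- The matrix `(1 + p^(ℓ-1) u, p^(ℓ-1) v; w, 1)` acting on column vectors `(x, y)`. -/
def kernelAct (hℓ : 2 ≤ ℓ) (a : Heis (ZMod p)) (z : ZMod (p ^ ℓ) × ZMod p) :
    ZMod (p ^ ℓ) × ZMod p :=
  (z.1 + (p : ZMod (p ^ ℓ)) ^ (ℓ - 1) * (a.u.val * z.1 + a.v.val * z.2.val),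
    a.w * ZMod.castHom (dvd_pow_self p (Nat.ne_zero_of_lt hℓ)) (ZMod p) z.1 + z.2)

variable (hℓ : 2 ≤ ℓ)

theorem kernelAct_one_zero (a : Heis (ZMod p)) :
    kernelAct hℓ a (1, 0) = (1 + (p : ZMod (p ^ ℓ)) ^ (ℓ - 1) * a.u.val, a.w) := by
  simp only [kernelAct, mul_one, ZMod.val_zero, Nat.cast_zero, mul_zero, add_zero, map_one]

theorem kernelAct_one (z : ZMod (p ^ ℓ) × ZMod p) : kernelAct hℓ 1 z = z := by
  simp [kernelAct]

variable [NeZero p]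

theorem kernelAct_add (a : Heis (ZMod p)) (z z' : ZMod (p ^ ℓ) × ZMod p) :
    kernelAct hℓ a (z + z') = kernelAct hℓ a z + kernelAct hℓ a z' := by
  have hy := ZMod.pow_pred_mul_val_eq (ℓ := ℓ) (by omega) (n := z.2.val + z'.2.val)
    (c := z.2 + z'.2) (by push_cast [ZMod.natCast_zmod_val]; rfl)
  simp only [kernelAct, Prod.fst_add, Prod.snd_add, map_add, Prod.mk_add_mk, Prod.mk.injEq]
  constructor
  · push_cast at hy
    linear_combination (a.v.val : ZMod (p ^ ℓ)) * hy
  · ring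

theorem kernelAct_mul (a b : Heis (ZMod p)) (z : ZMod (p ^ ℓ) × ZMod p) :
    kernelAct hℓ (a * b) z = kernelAct hℓ a (kernelAct hℓ b z) := by
  obtain ⟨x, y⟩ := z
  have : NeZero (p ^ ℓ) := ⟨pow_ne_zero _ (NeZero.ne p)⟩
  have hℓ0 : ℓ ≠ 0 := by omega
  have hx : ZMod.castHom (dvd_pow_self p hℓ0) (ZMod p) x = x.val := by
    rw [ZMod.castHom_apply, ZMod.natCast_val]
  have hu := ZMod.pow_pred_mul_val_eq hℓ0 (c := a.u + b.u + a.v * b.w)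
    (n := a.u.val + b.u.val + a.v.val * b.w.val) (by push_cast [ZMod.natCast_zmod_val]; rfl)
  have hv := ZMod.pow_pred_mul_val_eq hℓ0 (c := a.v + b.v)
    (n := a.v.val + b.v.val) (by push_cast [ZMod.natCast_zmod_val]; rfl)
  have hw := ZMod.pow_pred_mul_val_eq hℓ0
    (c := b.w * ZMod.castHom (dvd_pow_self p hℓ0) (ZMod p) x + y) (n := b.w.val * x.val + y.val)
    (by push_cast [hx, ZMod.natCast_zmod_val]; rfl)
  have hPP := ZMod.pow_pred_mul_pow_pred (p := p) hℓ
  push_cast [ZMod.natCast_zmod_val] at hu hv hw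
  simp only [kernelAct, mul_u, mul_v, mul_w, map_add, map_mul,
    ZMod.castHom_natCast_pow _ (by omega : ℓ - 1 ≠ 0),
    zero_mul, add_zero, Prod.mk.injEq]
  constructor
  · linear_combination x * hu + (y.val : ZMod (p ^ ℓ)) * hv - (a.v.val : ZMod (p ^ ℓ)) * hw -
      (a.u.val : ZMod (p ^ ℓ)) * (b.u.val * x + b.v.val * y.val) * hPP
  · ring

def toAddAut : Heis (ZMod p) →* Multiplicative (AddAut (ZMod (p ^ ℓ) × ZMod p)) :=
  letI : DistribMulAction (Heis (ZMod p)) (ZMod (p ^ ℓ) × ZMod p) :=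
    { smul := kernelAct hℓ
      one_smul := kernelAct_one hℓ
      mul_smul := kernelAct_mul hℓ
      smul_zero a := show kernelAct hℓ a 0 = 0 by simp [kernelAct]
      smul_add := kernelAct_add hℓ }
  DistribMulAction.toAddAut _ _

theorem toAddAut_apply (a : Heis (ZMod p)) (z : ZMod (p ^ ℓ) × ZMod p) :
    Multiplicative.toAdd (toAddAut hℓ a) z = kernelAct hℓ a z := rfl

theorem kernelAct_zero_left (a : Heis (ZMod p)) (y : ZMod p) :
    kernelAct hℓ a (0, y) = ((p : ZMod (p ^ ℓ)) ^ (ℓ - 1) * (a.v * y).val, y) := by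
  rw [ZMod.pow_pred_mul_val_eq (by omega) (n := a.v.val * y.val)
    (by push_cast [ZMod.natCast_zmod_val]; rfl)]
  simp only [kernelAct, mul_zero, map_zero, zero_add, Nat.cast_mul]

theorem toAddAut_injective : Function.Injective (toAddAut (p := p) hℓ) := by
  intro a b hab
  have h₁ := congrArg (fun φ : Multiplicative (AddAut _) => Multiplicative.toAdd φ (1, 0)) hab
  have h₂ := congrArg (fun φ : Multiplicative (AddAut _) => Multiplicative.toAdd φ (0, 1)) hab
  simp only [toAddAut_apply, kernelAct_one_zero, kernelAct_zero_left, mul_one, Prod.mk.injEq,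
    add_right_inj] at h₁ h₂
  ext
  exacts [ZMod.pow_pred_mul_val_injective (by omega) h₁.1,
    ZMod.pow_pred_mul_val_injective (by omega) h₂.1, h₁.2]

theorem range_toAddAut :
    Set.range (Multiplicative.toAdd ∘ ⇑(toAddAut (p := p) hℓ)) =
      {φ : AddAut (ZMod (p ^ ℓ) × ZMod p) |
        (∀ t : ZMod (p ^ ℓ), φ ((p : ZMod (p ^ ℓ)) * t, 0) = ((p : ZMod (p ^ ℓ)) * t, 0)) ∧
          ∀ y : ZMod p, (φ (0, y)).2 = y} := by
  have hℓ0 : ℓ ≠ 0 := by omega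
  ext φ
  constructor
  · rintro ⟨a, rfl⟩
    refine ⟨fun t => Prod.ext ?_ ?_, fun y => by simp [toAddAut_apply, kernelAct_zero_left]⟩
    · have hP := ZMod.pow_pred_mul_natCast_self (p := p) hℓ0
      simp only [Function.comp_apply, toAddAut_apply, kernelAct, ZMod.val_zero, Nat.cast_zero,
        mul_zero, add_zero]
      linear_combination (a.u.val : ZMod (p ^ ℓ)) * t * hP
    · simp only [Function.comp_apply, toAddAut_apply, kernelAct, ZMod.castHom_natCast_mul, mul_zero,
        add_zero]
  · rintro ⟨hfix, hsec⟩
    have hφ₁ : (p : ZMod (p ^ ℓ)) * ((φ (1, 0)).1 - 1) = 0 := by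
      have h := congrArg Prod.fst (hfix 1)
      rw [show ((p : ZMod (p ^ ℓ)) * 1, (0 : ZMod p)) = p • (1, 0) by simp, map_nsmul] at h
      simp only [nsmul_eq_mul, Prod.fst_mul, Prod.fst_natCast] at h
      linear_combination h
    have hφ₂ : (p : ZMod (p ^ ℓ)) * (φ (0, 1)).1 = 0 := by
      have h : φ (p • (0, 1)) = 0 := by simp
      rw [map_nsmul] at h
      simpa using congrArg Prod.fst h
    obtain ⟨u, hu⟩ := ZMod.exists_eq_pow_pred_mul_val hℓ0 hφ₁
    obtain ⟨v, hv⟩ := ZMod.exists_eq_pow_pred_mul_val hℓ0 hφ₂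
    refine ⟨⟨u, v, (φ (1, 0)).2⟩, ZMod.prod_addMonoidHom_ext ?_ ?_⟩
    · rw [Function.comp_apply, toAddAut_apply, kernelAct_one_zero, ← hu, add_sub_cancel]
    · rw [Function.comp_apply, toAddAut_apply, kernelAct_zero_left, mul_one, ← hv]
      exact Prod.ext rfl (hsec 1).symm

theorem image_center_toAddAut :
    (Multiplicative.toAdd ∘ ⇑(toAddAut (p := p) hℓ)) '' (Subgroup.center (Heis (ZMod p))) =
      {φ : AddAut (ZMod (p ^ ℓ) × ZMod p) | ∃ u : ZMod p,
        ∀ (x : ZMod (p ^ ℓ)) (y : ZMod p),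
          φ (x, y) = (x + (p : ZMod (p ^ ℓ)) ^ (ℓ - 1) * (u.val : ZMod (p ^ ℓ)) * x, y)} := by
  ext φ
  simp only [Set.mem_image, SetLike.mem_coe, mem_center_iff, Set.mem_ofPred_eq]
  constructor
  · rintro ⟨a, ⟨hv, hw⟩, rfl⟩
    refine ⟨a.u, fun x y => ?_⟩
    simp only [Function.comp_apply, toAddAut_apply, kernelAct, hv, hw, ZMod.val_zero,
      Nat.cast_zero, zero_mul, add_zero, zero_add, mul_assoc]
  · rintro ⟨u, hu⟩
    refine ⟨⟨u, 0, 0⟩, ⟨rfl, rfl⟩, AddEquiv.ext fun ⟨x, y⟩ => ?_⟩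
    simp only [Function.comp_apply, toAddAut_apply, kernelAct, hu, ZMod.val_zero,
      Nat.cast_zero, zero_mul, add_zero, zero_add, mul_assoc]

end Heis

/-- The kernel of `G → (ℤ/p^(ℓ-1)ℤ)ˣ × F_pˣ` is described as the automorphisms that fix `p • M`
pointwise and induce the identity on the second factor. -/
theorem stmt_14 (p ℓ : ℕ) (hp : p.Prime) (hℓ : 2 ≤ ℓ) :
    ∃ e : Heis (ZMod p) →* Multiplicative (AddAut (ZMod (p ^ ℓ) × ZMod p)),
      Function.Injective e ∧
      (∀ (a : Heis (ZMod p)) (x : ZMod (p ^ ℓ)) (y : ZMod p),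
        (Multiplicative.toAdd (e a)) (x, y) =
          (x + (p : ZMod (p ^ ℓ)) ^ (ℓ - 1) *
              ((a.u.val : ZMod (p ^ ℓ)) * x +
                (a.v.val : ZMod (p ^ ℓ)) * (y.val : ZMod (p ^ ℓ))),
            a.w * ZMod.castHom (dvd_pow_self p (by omega : ℓ ≠ 0)) (ZMod p) x + y)) ∧
      (Set.range (Multiplicative.toAdd ∘ ⇑e) =
        {φ : AddAut (ZMod (p ^ ℓ) × ZMod p) |
          (∀ t : ZMod (p ^ ℓ), φ ((p : ZMod (p ^ ℓ)) * t, 0) = ((p : ZMod (p ^ ℓ)) * t, 0)) ∧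
          ∀ y : ZMod p, (φ (0, y)).2 = y}) ∧
      ((Multiplicative.toAdd ∘ ⇑e) '' (Subgroup.center (Heis (ZMod p)) : Set (Heis (ZMod p))) =
        {φ : AddAut (ZMod (p ^ ℓ) × ZMod p) | ∃ u : ZMod p,
          ∀ (x : ZMod (p ^ ℓ)) (y : ZMod p),
            φ (x, y) = (x + (p : ZMod (p ^ ℓ)) ^ (ℓ - 1) * (u.val : ZMod (p ^ ℓ)) * x, y)}) := by
  have : NeZero p := ⟨hp.ne_zero⟩
  exact ⟨Heis.toAddAut hℓ, Heis.toAddAut_injective hℓ, fun _ _ _ => rfl,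
    Heis.range_toAddAut hℓ, Heis.image_center_toAddAut hℓ⟩
end

section
/- Let G be a finite group with subgroups G ⊇ P₁ ⊇ P₂ ⊇ U₂ ⊇ U₁ such that U₁ ◁ P₁ and U₂ ◁ P₂. Then for every complex representation ρ of P₂/U₂: Ind_{P₂}^{G}(Inf_{P₂/U₂}^{P₂} ρ) ≅ Ind_{P₁}^{G}(Inf_{P₁/U₁}^{P₁}(Ind_{P₂U₁/U₁}^{P₁/U₁}(Inf_{P₂/U₂}^{P₂/U₁} ρ))), where P₂/U₁ makes sense since U₁ ⊆ U₂ ⊆ P₂ and U₁ ◁ P₁ implies U₁ ◁ P₂. -/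
lemma sum_quot {H : Type} [Group H] [Fintype H] (N : Subgroup H) [N.Normal]
    [Fintype (H ⧸ N)] (F : H ⧸ N → ℂ) :
    ∑ z : H, F (QuotientGroup.mk z) = (Nat.card N : ℂ) * ∑ y : H ⧸ N, F y := by
  classical
  rw [← Fintype.sum_fiberwise (QuotientGroup.mk (s := N)) fun z => F (QuotientGroup.mk z),
    Finset.mul_sum]
  refine Finset.sum_congr rfl fun y _ => ?_
  have hout : (QuotientGroup.mk y.out : H ⧸ N) = y := QuotientGroup.out_eq' y
  have e : {z : H // QuotientGroup.mk z = y} ≃ ↥N :=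
    { toFun := fun z => ⟨y.out⁻¹ * z, by
        have : (QuotientGroup.mk y.out : H ⧸ N) = QuotientGroup.mk z.1 := by rw [z.2, hout]
        exact QuotientGroup.eq.mp this⟩
      invFun := fun n => ⟨y.out * n, by
        rw [← hout]
        exact (QuotientGroup.eq.mpr (by simpa using n.2)).symm⟩
      left_inv := fun z => by ext; simp
      right_inv := fun n => by ext; simp }
  calc ∑ z : {z : H // QuotientGroup.mk z = y}, F (QuotientGroup.mk z.1)
      = ∑ _z : {z : H // QuotientGroup.mk z = y}, F y :=
        Finset.sum_congr rfl fun z _ => by rw [z.2]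
    _ = (Fintype.card {z : H // QuotientGroup.mk z = y} : ℂ) * F y := by
        rw [Finset.sum_const, nsmul_eq_mul, Finset.card_univ]
    _ = (Nat.card ↥N : ℂ) * F y := by
        rw [← Nat.card_eq_fintype_card, Nat.card_congr e]

lemma card_aux {H : Type} [Group H] [Finite H] (N K : Subgroup H) [N.Normal] (hNK : N ≤ K) :
    Nat.card (Subgroup.map (QuotientGroup.mk' N) K) * Nat.card N = Nat.card K := by
  let φ := (QuotientGroup.mk' N).comp K.subtype
  have hrange : Subgroup.map (QuotientGroup.mk' N) K = φ.range := by
    rw [MonoidHom.range_comp, Subgroup.range_subtype]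
  have hker : φ.ker = N.subgroupOf K := by
    ext x
    simp [φ, MonoidHom.mem_ker, QuotientGroup.eq_one_iff, Subgroup.mem_subgroupOf]
  have h1 : Nat.card K = Nat.card (↥K ⧸ φ.ker) * Nat.card φ.ker :=
    Subgroup.card_eq_card_quotient_mul_card_subgroup φ.ker
  have h2 : Nat.card (↥K ⧸ φ.ker) = Nat.card φ.range :=
    Nat.card_congr (QuotientGroup.quotientKerEquivRange φ).toEquiv
  have h3 : Nat.card φ.ker = Nat.card N := by
    rw [hker]; exact Nat.card_congr (Subgroup.subgroupOfEquivOfLe hNK).toEquiv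
  rw [hrange, ← h2, ← h3, h1]

open scoped Classical in
/-- The class function on `G` induced from a function `f` on a subgroup `P`. -/
noncomputable def indCF {G : Type} [Group G] [Fintype G] (P : Subgroup G) (f : ↥P → ℂ) :
    G → ℂ := fun g =>
  (Nat.card P : ℂ)⁻¹ * ∑ x : G, if hx : x⁻¹ * g * x ∈ P then f ⟨x⁻¹ * g * x, hx⟩ else 0

/-- For a chain `G ⊇ P₁ ⊇ P₂ ⊇ U₂ ⊇ U₁` with `U₁ ◁ P₁` and `U₂ ◁ P₂`, inducing to `G` the
inflation to `P₂` of a representation of `P₂/U₂` is isomorphic to first inflating to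
`P₂U₁/U₁ ⊆ P₁/U₁`, inducing to `P₁/U₁`, inflating to `P₁`, and inducing to `G`; stated at
the level of characters (class functions), which determine representations of finite groups
over `ℂ` up to isomorphism.  Here `f` is the character of the representation of `P₂/U₂` and
`h` its inflation to `P₂U₁/U₁ = image of P₂ in P₁/U₁` (characterized by `hh`). -/
theorem stmt_19 {G : Type} [Group G] [Fintype G]
    (P₁ P₂ U₁ U₂ : Subgroup G)
    (h21 : P₂ ≤ P₁) (hU2 : U₂ ≤ P₂) (hU12 : U₁ ≤ U₂)
    [(U₁.subgroupOf P₁).Normal] [(U₂.subgroupOf P₂).Normal]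
    [Fintype (P₁ ⧸ U₁.subgroupOf P₁)]
    (f : P₂ ⧸ U₂.subgroupOf P₂ → ℂ)
    (hf : ∀ a b : P₂ ⧸ U₂.subgroupOf P₂, f (a * b) = f (b * a))
    (h : ↥(Subgroup.map (QuotientGroup.mk' (U₁.subgroupOf P₁)) (P₂.subgroupOf P₁)) → ℂ)
    (hh : ∀ (x : ↥P₂)
      (hm : QuotientGroup.mk' (U₁.subgroupOf P₁) ⟨(x : G), h21 x.2⟩ ∈
        Subgroup.map (QuotientGroup.mk' (U₁.subgroupOf P₁)) (P₂.subgroupOf P₁)),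
      h ⟨QuotientGroup.mk' (U₁.subgroupOf P₁) ⟨(x : G), h21 x.2⟩, hm⟩ =
        f (QuotientGroup.mk' (U₂.subgroupOf P₂) x)) :
    indCF P₂ (fun x => f (QuotientGroup.mk' (U₂.subgroupOf P₂) x)) =
      indCF P₁ (fun x =>
        indCF (Subgroup.map (QuotientGroup.mk' (U₁.subgroupOf P₁)) (P₂.subgroupOf P₁)) h
          (QuotientGroup.mk' (U₁.subgroupOf P₁) x)) := by
  classical
  funext g
  simp only [indCF]
  -- membership characterization
  have hmem : ∀ w : ↥P₁,
      ((QuotientGroup.mk w : ↥P₁ ⧸ U₁.subgroupOf P₁) ∈ Subgroup.map (QuotientGroup.mk' (U₁.subgroupOf P₁)) (P₂.subgroupOf P₁)) ↔ (w : G) ∈ P₂ := by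
    intro w
    constructor
    · rintro ⟨a, ha, hπ⟩
      have ha' : (a : G) ∈ P₂ := ha
      rw [QuotientGroup.mk'_apply] at hπ
      have hu : a⁻¹ * w ∈ U₁.subgroupOf P₁ := QuotientGroup.eq.mp hπ
      rw [Subgroup.mem_subgroupOf] at hu
      have hw : (w : G) = (a : G) * ((a⁻¹ * w : ↥P₁) : G) := by push_cast; group
      rw [hw]
      exact mul_mem ha' (hU2 (hU12 hu))
    · intro hw
      exact ⟨w, Subgroup.mem_subgroupOf.mpr hw, rfl⟩
  -- value characterization
  have hval : ∀ (w : ↥P₁) (hw : (w : G) ∈ P₂)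
      (hm : (QuotientGroup.mk w : ↥P₁ ⧸ U₁.subgroupOf P₁) ∈ Subgroup.map (QuotientGroup.mk' (U₁.subgroupOf P₁)) (P₂.subgroupOf P₁)),
      h ⟨QuotientGroup.mk w, hm⟩ =
        f (QuotientGroup.mk' (U₂.subgroupOf P₂) ⟨(w : G), hw⟩) := by
    intro w hw hm
    have hmk : QuotientGroup.mk' (U₁.subgroupOf P₁) (⟨(w : G), h21 hw⟩ : ↥P₁) =
        (QuotientGroup.mk w : ↥P₁ ⧸ U₁.subgroupOf P₁) := by
      rw [QuotientGroup.mk'_apply]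
    have hm' : QuotientGroup.mk' (U₁.subgroupOf P₁) (⟨(w : G), h21 hw⟩ : ↥P₁) ∈
        Subgroup.map (QuotientGroup.mk' (U₁.subgroupOf P₁)) (P₂.subgroupOf P₁) := by
      rw [hmk]; exact hm
    have hres := hh ⟨(w : G), hw⟩ hm'
    rw [← hres]
    exact congrArg h (Subtype.ext hmk.symm)
  -- cardinalities
  have hQU : (Nat.card (Subgroup.map (QuotientGroup.mk' (U₁.subgroupOf P₁)) (P₂.subgroupOf P₁)) : ℂ) * (Nat.card (U₁.subgroupOf P₁) : ℂ) = (Nat.card P₂ : ℂ) := by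
    have hUK : U₁.subgroupOf P₁ ≤ P₂.subgroupOf P₁ := by
      intro u hu
      rw [Subgroup.mem_subgroupOf] at *
      exact hU2 (hU12 hu)
    have h1 := card_aux (U₁.subgroupOf P₁) (P₂.subgroupOf P₁) hUK
    have h2 : Nat.card (P₂.subgroupOf P₁) = Nat.card P₂ :=
      Nat.card_congr (Subgroup.subgroupOfEquivOfLe h21).toEquiv
    rw [← h2, ← h1]
    push_cast
    ring
  have hU0 : (Nat.card (U₁.subgroupOf P₁) : ℂ) ≠ 0 := Nat.cast_ne_zero.mpr Nat.card_pos.ne'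
  have hQ0 : (Nat.card (Subgroup.map (QuotientGroup.mk' (U₁.subgroupOf P₁)) (P₂.subgroupOf P₁)) : ℂ) ≠ 0 := Nat.cast_ne_zero.mpr Nat.card_pos.ne'
  have hP₁0 : (Nat.card P₁ : ℂ) ≠ 0 := Nat.cast_ne_zero.mpr Nat.card_pos.ne'
  have hP₂0 : (Nat.card P₂ : ℂ) ≠ 0 := Nat.cast_ne_zero.mpr Nat.card_pos.ne'
  -- the key inner-sum computation
  have key : ∀ (x : G) (hx : x⁻¹ * g * x ∈ P₁),
      (Nat.card (U₁.subgroupOf P₁) : ℂ) *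
        ∑ y : ↥P₁ ⧸ U₁.subgroupOf P₁,
          (if hy : y⁻¹ * (QuotientGroup.mk' (U₁.subgroupOf P₁)) ⟨x⁻¹ * g * x, hx⟩ * y ∈ Subgroup.map (QuotientGroup.mk' (U₁.subgroupOf P₁)) (P₂.subgroupOf P₁) then
            h ⟨y⁻¹ * (QuotientGroup.mk' (U₁.subgroupOf P₁)) ⟨x⁻¹ * g * x, hx⟩ * y, hy⟩ else 0)
      = ∑ z : ↥P₁,
          (if hc : (x * ↑z)⁻¹ * g * (x * ↑z) ∈ P₂ then
            f ((QuotientGroup.mk' (U₂.subgroupOf P₂)) ⟨(x * ↑z)⁻¹ * g * (x * ↑z), hc⟩) else 0) := by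
    intro x hx
    rw [← sum_quot (U₁.subgroupOf P₁)
      (fun y => if hy : y⁻¹ * (QuotientGroup.mk' (U₁.subgroupOf P₁)) ⟨x⁻¹ * g * x, hx⟩ * y ∈ Subgroup.map (QuotientGroup.mk' (U₁.subgroupOf P₁)) (P₂.subgroupOf P₁) then
            h ⟨y⁻¹ * (QuotientGroup.mk' (U₁.subgroupOf P₁)) ⟨x⁻¹ * g * x, hx⟩ * y, hy⟩ else 0)]
    refine Finset.sum_congr rfl fun z _ => ?_
    have hcoe : ((z⁻¹ * (⟨x⁻¹ * g * x, hx⟩ : ↥P₁) * z : ↥P₁) : G)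
        = (x * ↑z)⁻¹ * g * (x * ↑z) := by
      push_cast
      group
    have hq : ((QuotientGroup.mk z : ↥P₁ ⧸ U₁.subgroupOf P₁))⁻¹ *
        (QuotientGroup.mk' (U₁.subgroupOf P₁)) ⟨x⁻¹ * g * x, hx⟩ * QuotientGroup.mk z
        = QuotientGroup.mk (z⁻¹ * ⟨x⁻¹ * g * x, hx⟩ * z) := rfl
    have hcond : ((QuotientGroup.mk (z⁻¹ * (⟨x⁻¹ * g * x, hx⟩ : ↥P₁) * z) :
        ↥P₁ ⧸ U₁.subgroupOf P₁) ∈ Subgroup.map (QuotientGroup.mk' (U₁.subgroupOf P₁)) (P₂.subgroupOf P₁)) ↔ (x * ↑z)⁻¹ * g * (x * ↑z) ∈ P₂ := by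
      rw [hmem, hcoe]
    simp only [hq]
    by_cases hc : (x * ↑z)⁻¹ * g * (x * ↑z) ∈ P₂
    · rw [dif_pos (hcond.mpr hc), dif_pos hc]
      have hw : ((z⁻¹ * (⟨x⁻¹ * g * x, hx⟩ : ↥P₁) * z : ↥P₁) : G) ∈ P₂ := by
        rw [hcoe]; exact hc
      rw [hval _ hw]
      exact congrArg f (congrArg _ (Subtype.ext hcoe))
    · rw [dif_neg (fun hq' => hc (hcond.mp hq')), dif_neg hc]
  -- rewrite the big sum
  have expand : (∑ x : G, if hx : x⁻¹ * g * x ∈ P₁ then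
        (Nat.card (Subgroup.map (QuotientGroup.mk' (U₁.subgroupOf P₁)) (P₂.subgroupOf P₁)) : ℂ)⁻¹ *
          ∑ y : ↥P₁ ⧸ U₁.subgroupOf P₁,
            (if hy : y⁻¹ * (QuotientGroup.mk' (U₁.subgroupOf P₁)) ⟨x⁻¹ * g * x, hx⟩ * y ∈ Subgroup.map (QuotientGroup.mk' (U₁.subgroupOf P₁)) (P₂.subgroupOf P₁) then
              h ⟨y⁻¹ * (QuotientGroup.mk' (U₁.subgroupOf P₁)) ⟨x⁻¹ * g * x, hx⟩ * y, hy⟩ else 0)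
      else 0)
      = ∑ x : G, ((Nat.card (Subgroup.map (QuotientGroup.mk' (U₁.subgroupOf P₁)) (P₂.subgroupOf P₁)) : ℂ)⁻¹ * (Nat.card (U₁.subgroupOf P₁) : ℂ)⁻¹ *
          ∑ z : ↥P₁,
            (if hc : (x * ↑z)⁻¹ * g * (x * ↑z) ∈ P₂ then
              f ((QuotientGroup.mk' (U₂.subgroupOf P₂)) ⟨(x * ↑z)⁻¹ * g * (x * ↑z), hc⟩)
            else 0)) := by
    refine Finset.sum_congr rfl fun x _ => ?_
    by_cases hx : x⁻¹ * g * x ∈ P₁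
    · rw [dif_pos hx, ← key x hx,
        mul_assoc ((Nat.card (Subgroup.map (QuotientGroup.mk' (U₁.subgroupOf P₁)) (P₂.subgroupOf P₁)) : ℂ))⁻¹,
        inv_mul_cancel_left₀ hU0]
    · rw [dif_neg hx]
      have hz : ∀ z : ↥P₁, (if hc : (x * ↑z)⁻¹ * g * (x * ↑z) ∈ P₂ then
          f ((QuotientGroup.mk' (U₂.subgroupOf P₂)) ⟨(x * ↑z)⁻¹ * g * (x * ↑z), hc⟩)
          else 0) = 0 := by
        intro z
        rw [dif_neg]
        intro hc
        apply hx
        have hrw : x⁻¹ * g * x = ↑z * ((x * ↑z)⁻¹ * g * (x * ↑z)) * (↑z)⁻¹ := by group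
        rw [hrw]
        exact mul_mem (mul_mem z.2 (h21 hc)) (inv_mem z.2)
      rw [Finset.sum_congr rfl fun z _ => hz z, Finset.sum_const, smul_zero, mul_zero]
  rw [expand]
  -- pull out constants, swap sums, change variables
  rw [← Finset.mul_sum]
  have swap : (∑ x : G, ∑ z : ↥P₁,
      (if hc : (x * ↑z)⁻¹ * g * (x * ↑z) ∈ P₂ then
        f ((QuotientGroup.mk' (U₂.subgroupOf P₂)) ⟨(x * ↑z)⁻¹ * g * (x * ↑z), hc⟩) else 0))
      = (Nat.card P₁ : ℂ) * ∑ w : G,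
        (if hc : w⁻¹ * g * w ∈ P₂ then
          f ((QuotientGroup.mk' (U₂.subgroupOf P₂)) ⟨w⁻¹ * g * w, hc⟩) else 0) := by
    rw [Finset.sum_comm]
    have hzx : ∀ z : ↥P₁, (∑ x : G,
        (if hc : (x * ↑z)⁻¹ * g * (x * ↑z) ∈ P₂ then
          f ((QuotientGroup.mk' (U₂.subgroupOf P₂)) ⟨(x * ↑z)⁻¹ * g * (x * ↑z), hc⟩) else 0))
        = ∑ w : G, (if hc : w⁻¹ * g * w ∈ P₂ then
          f ((QuotientGroup.mk' (U₂.subgroupOf P₂)) ⟨w⁻¹ * g * w, hc⟩) else 0) := by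
      intro z
      exact Fintype.sum_equiv (Equiv.mulRight (↑z : G)) _ _ (fun x => rfl)
    rw [Finset.sum_congr rfl fun z _ => hzx z, Finset.sum_const, nsmul_eq_mul,
      Finset.card_univ, ← Nat.card_eq_fintype_card]
  rw [swap]
  have final : ∀ S : ℂ, (Nat.card P₂ : ℂ)⁻¹ * S =
      (Nat.card P₁ : ℂ)⁻¹ *
        ((Nat.card (Subgroup.map (QuotientGroup.mk' (U₁.subgroupOf P₁)) (P₂.subgroupOf P₁)) : ℂ)⁻¹ *
          (Nat.card (U₁.subgroupOf P₁) : ℂ)⁻¹ * ((Nat.card P₁ : ℂ) * S)) := by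
    intro S
    rw [← hQU, mul_inv]
    have hc : (Nat.card P₁ : ℂ)⁻¹ *
        ((Nat.card (Subgroup.map (QuotientGroup.mk' (U₁.subgroupOf P₁)) (P₂.subgroupOf P₁)) : ℂ)⁻¹ *
          (Nat.card (U₁.subgroupOf P₁) : ℂ)⁻¹ * ((Nat.card P₁ : ℂ) * S)) =
        ((Nat.card P₁ : ℂ)⁻¹ * (Nat.card P₁ : ℂ)) *
          ((Nat.card (Subgroup.map (QuotientGroup.mk' (U₁.subgroupOf P₁)) (P₂.subgroupOf P₁)) : ℂ)⁻¹ *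
            ((Nat.card (U₁.subgroupOf P₁) : ℂ)⁻¹ * S)) := by ring
    rw [hc, inv_mul_cancel₀ hP₁0, one_mul, mul_assoc]
  exact final _
end
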